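/- arXiv:2410.14440 — 4 statements merged into one kernel-verified Lean document; each statement's English description precedes it below -/
import Mathlib

section
/- A Set-functor F weakly preserves 4/4-epi pullbacks if and only if for all relations r : X ⇸ Y and s : Y ⇸ Z with r surjective and s total, one has F̄s ⋅ F̄r = F̄(s ⋅ r), where F̄ denotes the Barr lifting of F. -/
open CategoryTheory

universe u

/-- A relation from `X` to `Y`. -/
abbrev Rel' (X Y : Type u) : Type u := X → Y → Prop

/-- Composite `s ⋅ r` of `r : X ⇸ Y` and `s : Y ⇸ Z`. -/
def relComp {X Y Z : Type u} (s : Rel' Y Z) (r : Rel' X Y) : Rel' X Z :=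
  fun x z => ∃ y, r x y ∧ s y z

/-- Converse relation `r°`. -/
def relConv {X Y : Type u} (r : Rel' X Y) : Rel' Y X := fun y x => r x y

/-- Identity relation `1_X`. -/
def relId (X : Type u) : Rel' X X := fun x y => x = y

/-- The graph relation of a function. -/
def graphRel {X Y : Type u} (f : X → Y) : Rel' X Y := fun x y => f x = y

/-- Pointwise order `r ≤ r'` on relations. -/
def relLe {X Y : Type u} (r r' : Rel' X Y) : Prop := ∀ x y, r x y → r' x y

/-- A relation is total if every `x` is related to some `y`. -/
def relTotal {X Y : Type u} (r : Rel' X Y) : Prop := ∀ x, ∃ y, r x y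

/-- A relation is surjective if every `y` is related to some `x`. -/
def relSurj {X Y : Type u} (r : Rel' X Y) : Prop := ∀ y, ∃ x, r x y

/-- A lax extension of a `Set`-functor `F`. -/
structure LaxExt (F : Type u ⥤ Type u) : Type (u + 1) where
  ext : ∀ {X Y : Type u}, Rel' X Y → Rel' (F.obj X) (F.obj Y)
  mono : ∀ {X Y : Type u} (r r' : Rel' X Y), relLe r r' → relLe (ext r) (ext r')
  lcomp : ∀ {X Y Z : Type u} (r : Rel' X Y) (s : Rel' Y Z),
    relLe (relComp (ext s) (ext r)) (ext (relComp s r))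
  mapLe : ∀ {X Y : Type u} (f : X → Y), relLe (graphRel (F.map (TypeCat.ofHom f))) (ext (graphRel f))
  mapConvLe : ∀ {X Y : Type u} (f : X → Y),
    relLe (relConv (graphRel (F.map (TypeCat.ofHom f)))) (ext (relConv (graphRel f)))

/-- A relax extension of a `Set`-functor `F` (a lax extension without (L2)). -/
structure RelaxExt (F : Type u ⥤ Type u) : Type (u + 1) where
  ext : ∀ {X Y : Type u}, Rel' X Y → Rel' (F.obj X) (F.obj Y)
  mono : ∀ {X Y : Type u} (r r' : Rel' X Y), relLe r r' → relLe (ext r) (ext r')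
  mapLe : ∀ {X Y : Type u} (f : X → Y), relLe (graphRel (F.map (TypeCat.ofHom f))) (ext (graphRel f))
  mapConvLe : ∀ {X Y : Type u} (f : X → Y),
    relLe (relConv (graphRel (F.map (TypeCat.ofHom f)))) (ext (relConv (graphRel f)))

/-- Normality (identity-preservation) of a lax extension. -/
def LaxExt.IsNormal {F : Type u ⥤ Type u} (L : LaxExt F) : Prop :=
  ∀ X : Type u, L.ext (relId X) = relId (F.obj X)

/-- The Barr lifting of a relation along a functor, computed from the canonical span. -/
def BarrLift (F : Type u ⥤ Type u) {X Y : Type u} (r : Rel' X Y) :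
    Rel' (F.obj X) (F.obj Y) :=
  fun a b => ∃ t : F.obj {p : X × Y // r p.1 p.2},
    F.map (TypeCat.ofHom (fun p : {p : X × Y // r p.1 p.2} => p.1.1)) t = a ∧
    F.map (TypeCat.ofHom (fun p : {p : X × Y // r p.1 p.2} => p.1.2)) t = b

/-- A commutative square of functions that is a pullback. -/
def IsPBSquare {P X Y Z : Type u} (p₁ : P → X) (p₂ : P → Y) (f : X → Z) (g : Y → Z) : Prop :=
  (∀ p, f (p₁ p) = g (p₂ p)) ∧ ∀ x y, f x = g y → ∃! p, p₁ p = x ∧ p₂ p = y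

/-- A commutative square of functions that is a weak pullback. -/
def IsWeakPBSquare {P X Y Z : Type u} (p₁ : P → X) (p₂ : P → Y) (f : X → Z) (g : Y → Z) : Prop :=
  (∀ p, f (p₁ p) = g (p₂ p)) ∧ ∀ x y, f x = g y → ∃ p, p₁ p = x ∧ p₂ p = y

/-- `F` preserves 1/4-iso pullbacks. -/
def Preserves14IsoPullbacks (F : Type u ⥤ Type u) : Prop :=
  ∀ (P X Y Z : Type u) (p₁ : P → X) (p₂ : P → Y) (f : X → Z) (g : Y → Z),
    Function.Bijective p₂ → IsPBSquare p₁ p₂ f g →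
      IsPBSquare (F.map (TypeCat.ofHom p₁)) (F.map (TypeCat.ofHom p₂)) (F.map (TypeCat.ofHom f)) (F.map (TypeCat.ofHom g))

/-- `F` preserves 1/4-iso 2/4-mono pullbacks. -/
def Preserves14Iso24MonoPullbacks (F : Type u ⥤ Type u) : Prop :=
  ∀ (P X Y Z : Type u) (p₁ : P → X) (p₂ : P → Y) (f : X → Z) (g : Y → Z),
    Function.Bijective p₂ → Function.Injective p₁ → Function.Injective g →
      IsPBSquare p₁ p₂ f g →
      IsPBSquare (F.map (TypeCat.ofHom p₁)) (F.map (TypeCat.ofHom p₂)) (F.map (TypeCat.ofHom f)) (F.map (TypeCat.ofHom g))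

/-- `F` preserves 1/4-mono pullbacks. -/
def Preserves14MonoPullbacks (F : Type u ⥤ Type u) : Prop :=
  ∀ (P X Y Z : Type u) (p₁ : P → X) (p₂ : P → Y) (f : X → Z) (g : Y → Z),
    Function.Injective p₁ → IsPBSquare p₁ p₂ f g →
      IsPBSquare (F.map (TypeCat.ofHom p₁)) (F.map (TypeCat.ofHom p₂)) (F.map (TypeCat.ofHom f)) (F.map (TypeCat.ofHom g))

/-- `F` preserves inverse images. -/
def PreservesInverseImages (F : Type u ⥤ Type u) : Prop :=
  ∀ (P X Y Z : Type u) (p₁ : P → X) (p₂ : P → Y) (f : X → Z) (g : Y → Z),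
    Function.Injective p₁ → Function.Injective g → IsPBSquare p₁ p₂ f g →
      IsPBSquare (F.map (TypeCat.ofHom p₁)) (F.map (TypeCat.ofHom p₂)) (F.map (TypeCat.ofHom f)) (F.map (TypeCat.ofHom g))

/-- `F` weakly preserves 4/4-epi pullbacks. -/
def WeaklyPreserves44EpiPullbacks (F : Type u ⥤ Type u) : Prop :=
  ∀ (P X Y Z : Type u) (p₁ : P → X) (p₂ : P → Y) (f : X → Z) (g : Y → Z),
    Function.Surjective p₁ → Function.Surjective p₂ →
    Function.Surjective f → Function.Surjective g →
    IsPBSquare p₁ p₂ f g →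
      IsWeakPBSquare (F.map (TypeCat.ofHom p₁)) (F.map (TypeCat.ofHom p₂)) (F.map (TypeCat.ofHom f)) (F.map (TypeCat.ofHom g))

/-- A (nonempty) composable sequence of relations from `X` to `Z`. -/
inductive RelChain : Type u → Type u → Type (u + 1)
  | single : ∀ {X Y : Type u}, Rel' X Y → RelChain X Y
  | cons : ∀ {X Y Z : Type u}, Rel' X Y → RelChain Y Z → RelChain X Z

/-- Composite of a composable sequence of relations (first relation applied first). -/
def RelChain.comp : ∀ {X Z : Type u}, RelChain X Z → Rel' X Z
  | _, _, .single r => r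
  | _, _, .cons r c => relComp (RelChain.comp c) r

/-- Composite of the Barr liftings of a composable sequence of relations. -/
def RelChain.barr (F : Type u ⥤ Type u) : ∀ {X Z : Type u}, RelChain X Z → Rel' (F.obj X) (F.obj Z)
  | _, _, .single r => BarrLift F r
  | _, _, .cons r c => relComp (RelChain.barr F c) (BarrLift F r)

/-- Length (number of relations) of a composable sequence. -/
def RelChain.length : ∀ {X Z : Type u}, RelChain X Z → ℕ
  | _, _, .single _ => 1
  | _, _, .cons _ c => RelChain.length c + 1

/-- All relations in a composable sequence are total and surjective. -/
def RelChain.allTS : ∀ {X Z : Type u}, RelChain X Z → Prop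
  | _, _, .single r => relTotal r ∧ relSurj r
  | _, _, .cons r c => (relTotal r ∧ relSurj r) ∧ RelChain.allTS c

/-- All relations in a composable sequence except the last one are total and surjective. -/
def RelChain.initTS : ∀ {X Z : Type u}, RelChain X Z → Prop
  | _, _, .single _ => True
  | _, _, .cons r c => (relTotal r ∧ relSurj r) ∧ RelChain.initTS c

/-- Composite of the images of a composable sequence of relations under an assignment `R`. -/
def RelChain.lift (F : Type u ⥤ Type u)
    (R : ∀ {X Y : Type u}, Rel' X Y → Rel' (F.obj X) (F.obj Y)) :
    ∀ {X Z : Type u}, RelChain X Z → Rel' (F.obj X) (F.obj Z)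
  | _, _, .single r => R r
  | _, _, .cons r c => relComp (RelChain.lift F (fun {_ _} s => R s) c) (R r)

/-- `r ⋅ (r° ⋅ r)ⁿ`. -/
def dfPow {X Y : Type u} (r : Rel' X Y) : ℕ → Rel' X Y
  | 0 => r
  | n + 1 => relComp (dfPow r n) (relComp (relConv r) r)

/-- The difunctional closure `r̂ = ⋁ₙ r ⋅ (r° ⋅ r)ⁿ` of a relation. -/
def difunClosure {X Y : Type u} (r : Rel' X Y) : Rel' X Y :=
  fun x y => ∃ n : ℕ, dfPow r n x y

/-! To get `F̄s ⋅ F̄r ≤ F̄(s ⋅ r)`, witnesses in `F R` and `F S` that agree in `F Y` must be glued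
to an element of `F` of the pullback of `R → Y ← S`; when `r` is surjective and `s` total, all four
maps of that pullback are surjective. The reverse inclusion holds for every functor, by choosing
a middle point for each pair in `s ⋅ r`. Conversely, if `F f a = F g b`, then `(a, b)` lies in
`F̄(graph g)° ⋅ F̄(graph f)` through `F f a`, hence in `F̄((graph g)° ⋅ graph f)`, and the pullback
of `f` and `g` covers the span of that relation. -/

section BarrLifting

variable (F : Type u ⥤ Type u)

lemma map_ofHom_map_ofHom_apply {X Y Z : Type u} (f : X → Y) (g : Y → Z) (t : F.obj X) :
    F.map (TypeCat.ofHom g) (F.map (TypeCat.ofHom f) t) = F.map (TypeCat.ofHom (g ∘ f)) t :=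
  (F.map_comp_apply (TypeCat.ofHom f) (TypeCat.ofHom g) t).symm

lemma map_ofHom_id_apply {X : Type u} (t : F.obj X) :
    F.map (TypeCat.ofHom (fun x : X => x)) t = t :=
  F.map_id_apply X t

lemma map_ofHom_comm {P X Y Z : Type u} {p₁ : P → X} {p₂ : P → Y} {f : X → Z} {g : Y → Z}
    (h : ∀ p, f (p₁ p) = g (p₂ p)) (t : F.obj P) :
    F.map (TypeCat.ofHom f) (F.map (TypeCat.ofHom p₁) t) =
      F.map (TypeCat.ofHom g) (F.map (TypeCat.ofHom p₂) t) := by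
  rw [map_ofHom_map_ofHom_apply, map_ofHom_map_ofHom_apply, show f ∘ p₁ = g ∘ p₂ from funext h]

variable {F}

lemma barrLift_of_span {P X Y : Type u} {r : Rel' X Y} {p₁ : P → X} {p₂ : P → Y}
    (h : ∀ p, r (p₁ p) (p₂ p)) (t : F.obj P) :
    BarrLift F r (F.map (TypeCat.ofHom p₁) t) (F.map (TypeCat.ofHom p₂) t) :=
  ⟨F.map (TypeCat.ofHom fun p => ⟨(p₁ p, p₂ p), h p⟩) t,
    map_ofHom_map_ofHom_apply F _ _ t, map_ofHom_map_ofHom_apply F _ _ t⟩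

lemma BarrLift.exists_of_span {P X Y : Type u} {r : Rel' X Y} {p₁ : P → X} {p₂ : P → Y}
    (h : ∀ x y, r x y → ∃ p, p₁ p = x ∧ p₂ p = y) {a : F.obj X} {b : F.obj Y}
    (hab : BarrLift F r a b) :
    ∃ t : F.obj P, F.map (TypeCat.ofHom p₁) t = a ∧ F.map (TypeCat.ofHom p₂) t = b := by
  choose ψ hψ₁ hψ₂ using fun q : {q : X × Y // r q.1 q.2} => h q.1.1 q.1.2 q.2
  obtain ⟨t, rfl, rfl⟩ := hab
  refine ⟨F.map (TypeCat.ofHom ψ) t, ?_, ?_⟩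
  · rw [map_ofHom_map_ofHom_apply, show p₁ ∘ ψ = _ from funext hψ₁]
  · rw [map_ofHom_map_ofHom_apply, show p₂ ∘ ψ = _ from funext hψ₂]

lemma barrLift_graphRel {X Y : Type u} (f : X → Y) (a : F.obj X) :
    BarrLift F (graphRel f) a (F.map (TypeCat.ofHom f) a) := by
  simpa only [map_ofHom_id_apply] using
    barrLift_of_span (r := graphRel f) (p₁ := fun x => x) (fun _ => rfl) a

lemma barrLift_relConv_graphRel {X Y : Type u} (f : X → Y) (b : F.obj X) :
    BarrLift F (relConv (graphRel f)) (F.map (TypeCat.ofHom f) b) b := by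
  simpa only [map_ofHom_id_apply] using
    barrLift_of_span (r := relConv (graphRel f)) (p₂ := fun x => x) (fun _ => rfl) b

lemma barrLift_relComp_le {X Y Z : Type u} (r : Rel' X Y) (s : Rel' Y Z) :
    relLe (BarrLift F (relComp s r)) (relComp (BarrLift F s) (BarrLift F r)) := by
  intro a c hac
  obtain ⟨t, rfl, rfl⟩ := hac.exists_of_span
    (P := {q : X × Y × Z // r q.1 q.2.1 ∧ s q.2.1 q.2.2}) (p₁ := fun q => q.1.1)
    (p₂ := fun q => q.1.2.2) fun x z ⟨y, hxy, hyz⟩ => ⟨⟨(x, y, z), hxy, hyz⟩, rfl, rfl⟩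
  exact ⟨_, barrLift_of_span (fun q => q.2.1) t, barrLift_of_span (fun q => q.2.2) t⟩

end BarrLifting

lemma isPBSquare_subtype {X Y Z : Type u} (f : X → Z) (g : Y → Z) :
    IsPBSquare (fun q : {q : X × Y // f q.1 = g q.2} => q.1.1) (fun q => q.1.2) f g :=
  ⟨fun q => q.2, fun x y h =>
    ⟨⟨(x, y), h⟩, ⟨rfl, rfl⟩, fun _ ⟨hx, hy⟩ => by ext <;> simp [← hx, ← hy]⟩⟩

lemma surjective_subtype_fst {X Y Z : Type u} (f : X → Z) {g : Y → Z}
    (hg : Function.Surjective g) :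
    Function.Surjective (fun q : {q : X × Y // f q.1 = g q.2} => q.1.1) := fun x =>
  let ⟨y, hy⟩ := hg (f x)
  ⟨⟨(x, y), hy.symm⟩, rfl⟩

lemma surjective_subtype_snd {X Y Z : Type u} {f : X → Z} (g : Y → Z)
    (hf : Function.Surjective f) :
    Function.Surjective (fun q : {q : X × Y // f q.1 = g q.2} => q.1.2) := fun y =>
  let ⟨x, hx⟩ := hf (g y)
  ⟨⟨(x, y), hx⟩, rfl⟩

lemma WeaklyPreserves44EpiPullbacks.exists_of_map_eq {F : Type u ⥤ Type u}
    (hF : WeaklyPreserves44EpiPullbacks F) {X Y Z : Type u} {f : X → Z} {g : Y → Z}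
    (hf : Function.Surjective f) (hg : Function.Surjective g) {a : F.obj X} {b : F.obj Y}
    (hab : F.map (TypeCat.ofHom f) a = F.map (TypeCat.ofHom g) b) :
    ∃ t : F.obj {q : X × Y // f q.1 = g q.2},
      F.map (TypeCat.ofHom fun q => q.1.1) t = a ∧ F.map (TypeCat.ofHom fun q => q.1.2) t = b :=
  (hF _ _ _ _ _ _ f g (surjective_subtype_fst f hg) (surjective_subtype_snd g hf) hf hg
    (isPBSquare_subtype f g)).2 a b hab

lemma WeaklyPreserves44EpiPullbacks.relComp_barrLift_le {F : Type u ⥤ Type u}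
    (hF : WeaklyPreserves44EpiPullbacks F) {X Y Z : Type u} {r : Rel' X Y} {s : Rel' Y Z}
    (hr : relSurj r) (hs : relTotal s) :
    relLe (relComp (BarrLift F s) (BarrLift F r)) (BarrLift F (relComp s r)) := by
  rintro a c ⟨b, ⟨tr, rfl, hb⟩, ⟨ts, hb', rfl⟩⟩
  have hπr : Function.Surjective fun p : {p : X × Y // r p.1 p.2} => p.1.2 := fun y =>
    let ⟨x, hx⟩ := hr y
    ⟨⟨(x, y), hx⟩, rfl⟩
  have hπs : Function.Surjective fun p : {p : Y × Z // s p.1 p.2} => p.1.1 := fun y =>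
    let ⟨z, hz⟩ := hs y
    ⟨⟨(y, z), hz⟩, rfl⟩
  obtain ⟨t, rfl, rfl⟩ := hF.exists_of_map_eq hπr hπs (hb.trans hb'.symm)
  simp only [map_ofHom_map_ofHom_apply]
  exact barrLift_of_span (fun q => ⟨q.1.1.1.2, q.1.1.2, q.2 ▸ q.1.2.2⟩) t

lemma weaklyPreserves44EpiPullbacks_of_barrLift_relComp {F : Type u ⥤ Type u}
    (hF : ∀ (X Y Z : Type u) (r : Rel' X Y) (s : Rel' Y Z), relSurj r → relTotal s →
      relComp (BarrLift F s) (BarrLift F r) = BarrLift F (relComp s r)) :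
    WeaklyPreserves44EpiPullbacks F := by
  intro P X Y Z p₁ p₂ f g _ _ hf hg hPB
  refine ⟨map_ofHom_comm F hPB.1, fun a b hab => ?_⟩
  have hab' : BarrLift F (relComp (relConv (graphRel g)) (graphRel f)) a b := by
    rw [← hF X Z Y (graphRel f) (relConv (graphRel g)) hf hg]
    exact ⟨_, barrLift_graphRel f a, hab ▸ barrLift_relConv_graphRel g b⟩
  exact hab'.exists_of_span fun x y ⟨z, hx, hy⟩ => (hPB.2 x y (hx.trans hy.symm)).exists

/-- A Set-functor weakly preserves 4/4-epi pullbacks iff the Barr lifting is functorial on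
composites of a surjective relation followed by a total relation. -/
theorem stmt15 (F : Type u ⥤ Type u) :
    WeaklyPreserves44EpiPullbacks F ↔
      ∀ (X Y Z : Type u) (r : Rel' X Y) (s : Rel' Y Z),
        relSurj r → relTotal s →
        relComp (BarrLift F s) (BarrLift F r) = BarrLift F (relComp s r) := by
  refine ⟨fun hF X Y Z r s hr hs => ?_, weaklyPreserves44EpiPullbacks_of_barrLift_relComp⟩
  funext a c
  exact propext ⟨hF.relComp_barrLift_le hr hs a c, barrLift_relComp_le r s a c⟩
end

section
/- Let F be a Set-functor that preserves 1/4-mono pullbacks. If for every composable sequence of total and surjective relations r₁, …, rₙ one has that rₙ ⋅ … ⋅ r₁ = 1_X (for some set X) implies F̄rₙ ⋅ … ⋅ F̄r₁ ≤ 1_{F X}, then F admits a normal lax extension. Here F̄ denotes the Barr lifting of F. -/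
open CategoryTheory

universe u

/-! The lax extension is `L r = ⋁ {F̄rₙ ⋯ F̄r₁ | rₙ ⋯ r₁ ≤ r}`, the join over all composable
chains; (L1) and (L3) are immediate and (L2) holds by concatenating chains. For normality, a
Barr witness of `F̄rₙ ⋯ F̄r₁ a b` with `rₙ ⋯ r₁ ≤ 1_X` is restricted to the elements lying on
complete paths `x r₁ y₁ ⋯ rₙ z`: a forward pass shrinks each codomain to the image of the
previous domain, and the backward pass shrinks each domain to the elements reaching the next
one. Pulling a Barr witness back along such an inclusion is a pullback whose leg into the span is
injective, so preservation of 1/4-mono pullbacks lets the witness follow. The restricted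
relations are total and surjective and compose to the identity of a subset of `X`, so the
hypothesis gives `a = b`. -/

lemma map_ofHom_map_ofHom (F : Type u ⥤ Type u) {X Y Z : Type u} (f : X → Y) (g : Y → Z)
    (x : F.obj X) : F.map (↾g) (F.map (↾f) x) = F.map (↾(g ∘ f)) x :=
  (F.map_comp_apply (↾f) (↾g) x).symm

lemma map_ofHom_id (F : Type u ⥤ Type u) {X : Type u} (x : F.obj X) :
    F.map (↾(id : X → X)) x = x :=
  F.map_id_apply X x

namespace BarrLift

variable {F : Type u ⥤ Type u} {X Y : Type u} {r : Rel' X Y} {a : F.obj X} {b : F.obj Y}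

lemma conv (hab : BarrLift F r a b) : BarrLift F (relConv r) b a := by
  obtain ⟨t, rfl, rfl⟩ := hab
  exact ⟨F.map (↾fun p => ⟨(p.1.2, p.1.1), p.2⟩) t,
    map_ofHom_map_ofHom F _ _ t, map_ofHom_map_ofHom F _ _ t⟩

lemma graph (f : X → Y) (a : F.obj X) : BarrLift F (graphRel f) a (F.map (↾f) a) :=
  ⟨F.map (↾fun x => ⟨(x, f x), rfl⟩) a,
    (map_ofHom_map_ofHom F _ _ a).trans (map_ofHom_id F a), map_ofHom_map_ofHom F _ _ a⟩

lemma refl_relId (a : F.obj X) : BarrLift F (relId X) a a := by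
  have h := graph (F := F) id a
  rw [map_ofHom_id] at h
  exact h

lemma exists_map_val_dom (hab : BarrLift F r a b) :
    ∃ a' : F.obj {x | ∃ y, r x y}, F.map (↾Subtype.val) a' = a := by
  obtain ⟨t, rfl, -⟩ := hab
  exact ⟨F.map (↾fun p => ⟨p.1.1, p.1.2, p.2⟩) t, map_ofHom_map_ofHom F _ _ t⟩

lemma exists_map_val_ran (hab : BarrLift F r a b) :
    ∃ b' : F.obj {y | ∃ x, r x y}, F.map (↾Subtype.val) b' = b :=
  hab.conv.exists_map_val_dom

lemma comap_left (hF : Preserves14MonoPullbacks F) {S : Type u} {i : S → X}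
    (hi : Function.Injective i) {a : F.obj S} (hab : BarrLift F r (F.map (↾i) a) b) :
    BarrLift F (fun s y => r (i s) y) a b := by
  obtain ⟨t, ht, rfl⟩ := hab
  let incl : {p : S × Y // r (i p.1) p.2} → {p : X × Y // r p.1 p.2} :=
    fun p => ⟨(i p.1.1, p.1.2), p.2⟩
  have hincl : Function.Injective incl := by
    rintro ⟨⟨s, y⟩, _⟩ ⟨⟨s', y'⟩, _⟩ h
    simp only [incl, Subtype.mk.injEq, Prod.mk.injEq] at h
    obtain ⟨hs, rfl⟩ := h
    cases hi hs
    rfl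
  have hpb : IsPBSquare incl (fun p => p.1.1) (fun q => q.1.1) i := by
    refine ⟨fun _ => rfl, fun q s hqs => ⟨⟨(s, q.1.2), hqs ▸ q.2⟩, ⟨?_, rfl⟩, ?_⟩⟩
    · exact Subtype.ext (Prod.ext hqs.symm rfl)
    · rintro p ⟨rfl, rfl⟩
      rfl
  obtain ⟨t', ⟨rfl, ht'⟩, -⟩ := (hF _ _ _ _ _ _ _ _ hincl hpb).2 t a ht
  exact ⟨t', ht', (map_ofHom_map_ofHom F incl (fun q => q.1.2) t').symm⟩

lemma comap_right (hF : Preserves14MonoPullbacks F) {T : Type u} {j : T → Y}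
    (hj : Function.Injective j) {b : F.obj T} (hab : BarrLift F r a (F.map (↾j) b)) :
    BarrLift F (fun x t => r x (j t)) a b :=
  (hab.conv.comap_left hF hj).conv

lemma exists_restrict_dom (hF : Preserves14MonoPullbacks F) {T : Type u} {j : T → Y}
    (hj : Function.Injective j) {b : F.obj T} (hab : BarrLift F r a (F.map (↾j) b)) :
    ∃ a' : F.obj {x | ∃ t, r x (j t)}, F.map (↾Subtype.val) a' = a ∧
      BarrLift F (fun x t => r x.1 (j t)) a' b := by
  have hab' := hab.comap_right hF hj
  obtain ⟨a', rfl⟩ := hab'.exists_map_val_dom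
  exact ⟨a', rfl, hab'.comap_left hF Subtype.val_injective⟩

end BarrLift

lemma relComp_assoc {W X Y Z : Type u} (r : Rel' W X) (s : Rel' X Y) (t : Rel' Y Z) :
    relComp t (relComp s r) = relComp (relComp t s) r := by
  funext w z
  exact propext ⟨fun ⟨y, ⟨x, hr, hs⟩, ht⟩ => ⟨x, hr, y, hs, ht⟩,
    fun ⟨x, hr, y, hs, ht⟩ => ⟨y, ⟨x, hr, hs⟩, ht⟩⟩

lemma eq_relId_of_relTotal_of_relLe {X : Type u} {r : Rel' X X} (htot : relTotal r)
    (hle : relLe r (relId X)) : r = relId X := by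
  funext x y
  refine propext ⟨hle x y, ?_⟩
  rintro rfl
  obtain ⟨y, hy⟩ := htot x
  rwa [← hle x y hy] at hy

namespace RelChain

def append : ∀ {X Y Z : Type u}, RelChain X Y → RelChain Y Z → RelChain X Z
  | _, _, _, .single r, c₂ => .cons r c₂
  | _, _, _, .cons r c, c₂ => .cons r (append c c₂)

lemma comp_append : ∀ {X Y Z : Type u} (c₁ : RelChain X Y) (c₂ : RelChain Y Z),
    (c₁.append c₂).comp = relComp c₂.comp c₁.comp
  | _, _, _, .single _, _ => rfl
  | _, _, _, .cons r c, c₂ => by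
    simp only [append, RelChain.comp, comp_append c c₂, relComp_assoc]

lemma barr_append (F : Type u ⥤ Type u) : ∀ {X Y Z : Type u} (c₁ : RelChain X Y)
    (c₂ : RelChain Y Z), (c₁.append c₂).barr F = relComp (c₂.barr F) (c₁.barr F)
  | _, _, _, .single _, _ => rfl
  | _, _, _, .cons r c, c₂ => by
    simp only [append, RelChain.barr, barr_append F c c₂, relComp_assoc]

lemma allTS.relTotal_comp : ∀ {X Y : Type u} {c : RelChain X Y}, c.allTS → relTotal c.comp
  | _, _, .single _, h => h.1
  | _, _, .cons _ _, h => fun x => by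
    obtain ⟨y, hxy⟩ := h.1.1 x
    obtain ⟨z, hyz⟩ := allTS.relTotal_comp h.2 y
    exact ⟨z, y, hxy, hyz⟩

lemma allTS.relSurj_comp : ∀ {X Y : Type u} {c : RelChain X Y}, c.allTS → relSurj c.comp
  | _, _, .single _, h => h.2
  | _, _, .cons _ _, h => fun z => by
    obtain ⟨y, hyz⟩ := allTS.relSurj_comp h.2 z
    obtain ⟨x, hxy⟩ := h.1.2 y
    exact ⟨x, y, hxy, hyz⟩

variable {F : Type u ⥤ Type u}

theorem exists_allTS_restrict (hF : Preserves14MonoPullbacks F) :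
    ∀ {X Y : Type u} (c : RelChain X Y) {S : Type u} {i : S → X}, Function.Injective i →
      ∀ {a : F.obj S} {b : F.obj Y}, c.barr F (F.map (↾i) a) b →
      ∃ (S' : Set S) (T : Set Y) (c' : RelChain S' T) (a' : F.obj S') (b' : F.obj T),
        c'.allTS ∧ relLe c'.comp (fun x y => c.comp (i x) y) ∧ c'.barr F a' b' ∧
          F.map (↾Subtype.val) a' = a ∧ F.map (↾Subtype.val) b' = b
  | _, _, .single r, _, i, hi, _, _, hab => by
    have hab' := BarrLift.comap_left hF hi hab
    obtain ⟨b', rfl⟩ := hab'.exists_map_val_ran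
    obtain ⟨a', rfl, hab''⟩ := hab'.exists_restrict_dom hF Subtype.val_injective
    refine ⟨_, _, .single fun x y => r (i x) y, a', b', ⟨fun x => ?_, fun y => ?_⟩,
      fun _ _ h => h, hab'', rfl, rfl⟩
    · obtain ⟨y, hxy⟩ := x.2
      exact ⟨y, hxy⟩
    · obtain ⟨x, hxy⟩ := y.2
      exact ⟨⟨x, y, hxy⟩, hxy⟩
  | _, _, .cons r c, _, i, hi, _, _, hab => by
    obtain ⟨m, hm, hc⟩ := hab
    have hm' := BarrLift.comap_left hF hi hm
    obtain ⟨m₁, rfl⟩ := hm'.exists_map_val_ran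
    obtain ⟨W, Z, c', m', b', hTS, hcomp, hbarr, rfl, rfl⟩ :=
      exists_allTS_restrict hF c Subtype.val_injective hc
    rw [map_ofHom_map_ofHom] at hm'
    obtain ⟨a', rfl, hm''⟩ :=
      hm'.exists_restrict_dom hF (Subtype.val_injective.comp Subtype.val_injective)
    refine ⟨_, Z, .cons (fun x (w : W) => r (i x) w.1.1) c', a', b',
      ⟨⟨fun x => ?_, fun w => ?_⟩, hTS⟩, ?_, ⟨m', hm'', hbarr⟩, rfl, rfl⟩
    · obtain ⟨w, hxw⟩ := x.2
      exact ⟨w, hxw⟩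
    · obtain ⟨x, hxw⟩ := w.1.2
      exact ⟨⟨x, w, hxw⟩, hxw⟩
    · rintro x z ⟨w, hxw, hwz⟩
      exact ⟨w.1.1, hxw, hcomp w z hwz⟩

end RelChain

theorem RelChain.barr_le_relId (F : Type u ⥤ Type u) (hF : Preserves14MonoPullbacks F)
    (hchain : ∀ (X : Type u) (c : RelChain X X), RelChain.allTS c →
      RelChain.comp c = relId X → relLe (RelChain.barr F c) (relId (F.obj X)))
    {X : Type u} (c : RelChain X X) (hc : relLe c.comp (relId X)) :
    relLe (c.barr F) (relId (F.obj X)) := by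
  intro a b hab
  rw [← map_ofHom_id F a] at hab
  obtain ⟨S, T, c', a', b', hTS, hcomp, hbarr, rfl, rfl⟩ :=
    c.exists_allTS_restrict hF Function.injective_id hab
  have hval (x : S) (y : T) (hxy : c'.comp x y) : x.1 = y.1 := hc _ _ (hcomp x y hxy)
  obtain rfl : S = T := by
    ext z
    refine ⟨fun hz => ?_, fun hz => ?_⟩
    · obtain ⟨y, hy⟩ := hTS.relTotal_comp ⟨z, hz⟩
      rw [show z = y.1 from hval _ _ hy]
      exact y.2
    · obtain ⟨x, hx⟩ := hTS.relSurj_comp ⟨z, hz⟩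
      rw [← show x.1 = z from hval _ _ hx]
      exact x.2
  have hid : c'.comp = relId S := eq_relId_of_relTotal_of_relLe hTS.relTotal_comp
    fun x y hxy => Subtype.ext (hval x y hxy)
  have hab' : a' = b' := hchain S c' hTS hid a' b' hbarr
  rw [hab']
  rfl

def chainLaxExt (F : Type u ⥤ Type u) : LaxExt F where
  ext {X Y} r a b := ∃ c : RelChain X Y, relLe c.comp r ∧ c.barr F a b
  mono _ _ hr _ _ := fun ⟨c, hc, hab⟩ => ⟨c, fun x y hxy => hr x y (hc x y hxy), hab⟩
  lcomp _ _ _ _ := fun ⟨m, ⟨c₁, hc₁, h₁⟩, ⟨c₂, hc₂, h₂⟩⟩ => by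
    refine ⟨c₁.append c₂, ?_, ?_⟩
    · rw [RelChain.comp_append]
      exact fun x z ⟨y, hxy, hyz⟩ => ⟨y, hc₁ x y hxy, hc₂ y z hyz⟩
    · rw [RelChain.barr_append]
      exact ⟨m, h₁, h₂⟩
  mapLe f a _ hab := ⟨.single (graphRel f), fun _ _ h => h, hab ▸ BarrLift.graph f a⟩
  mapConvLe f _ b hab := ⟨.single (relConv (graphRel f)), fun _ _ h => h,
    hab ▸ (BarrLift.graph f b).conv⟩

theorem chainLaxExt_isNormal (F : Type u ⥤ Type u) (hF : Preserves14MonoPullbacks F)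
    (hchain : ∀ (X : Type u) (c : RelChain X X), RelChain.allTS c →
      RelChain.comp c = relId X → relLe (RelChain.barr F c) (relId (F.obj X))) :
    (chainLaxExt F).IsNormal := by
  intro X
  funext a b
  refine propext ⟨fun ⟨c, hc, hab⟩ => c.barr_le_relId F hF hchain hc a b hab, ?_⟩
  rintro rfl
  exact ⟨.single (relId X), fun _ _ h => h, BarrLift.refl_relId a⟩

/-- A functor preserving 1/4-mono pullbacks admits a normal lax extension provided the
subidentity condition holds for all composable sequences of total and surjective
relations. -/
theorem stmt17 (F : Type u ⥤ Type u) (h : Preserves14MonoPullbacks F)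
    (hchain : ∀ (X : Type u) (c : RelChain X X), RelChain.allTS c →
      RelChain.comp c = relId X → relLe (RelChain.barr F c) (relId (F.obj X))) :
    ∃ L : LaxExt F, L.IsNormal :=
  ⟨chainLaxExt F, chainLaxExt_isNormal F h hchain⟩
end

section
/- Let r₁ : X ⇸ X₁, r₂ : X₁ ⇸ X₂ and r₃ : X₂ ⇸ X be total and surjective relations, and let r̂₂ denote the difunctional closure of r₂. If r₃ ⋅ r₂ ⋅ r₁ = 1_X, then r₃ ⋅ r̂₂ ⋅ r₁ = 1_X. -/
open CategoryTheory

universe u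

/-! The identity `r₃ ⋅ r₂ ⋅ r₁ = 1` forces `r₁` to absorb every zig-zag step `r₂° ⋅ r₂`:
if `a` and `m` have a common `r₂`-image `k`, then both `r₁`-preimages of `a` and of `m` coincide
with an `r₃`-image of `k`. Hence `(r₂ ⋅ (r₂° ⋅ r₂)ⁿ) ⋅ r₁ = r₂ ⋅ r₁` for every `n`, so replacing
`r₂` by its difunctional closure does not change the composite. -/

theorem dfPow_relComp_le_of_absorbs {W X Y : Type u} {r : Rel' X Y} {s : Rel' W X}
    (hs : relLe (relComp (relComp (relConv r) r) s) s) (n : ℕ) :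
    relLe (relComp (dfPow r n) s) (relComp r s) := by
  induction n with
  | zero => exact fun _ _ h => h
  | succ n ih =>
    rintro w y ⟨x, hsx, x', hrr, hdf⟩
    exact ih w y ⟨x', hs w x' ⟨x, hsx, hrr⟩, hdf⟩

theorem relComp_difunClosure_of_absorbs {W X Y : Type u} {r : Rel' X Y} {s : Rel' W X}
    (hs : relLe (relComp (relComp (relConv r) r) s) s) :
    relComp (difunClosure r) s = relComp r s := by
  funext w y
  exact propext ⟨fun ⟨x, hsx, n, hdf⟩ => dfPow_relComp_le_of_absorbs hs n w y ⟨x, hsx, hdf⟩,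
    fun ⟨x, hsx, hr⟩ => ⟨x, hsx, 0, hr⟩⟩

section CompEqId

variable {X X₁ X₂ : Type u} {r₁ : Rel' X X₁} {r₂ : Rel' X₁ X₂} {r₃ : Rel' X₂ X}

theorem eq_of_relComp_eq_relId (h : relComp r₃ (relComp r₂ r₁) = relId X)
    {x x' : X} {a : X₁} {b : X₂} (h₁ : r₁ x a) (h₂ : r₂ a b) (h₃ : r₃ b x') : x = x' :=
  (congrFun (congrFun h x) x').mp ⟨b, ⟨a, h₁, h₂⟩, h₃⟩

theorem absorbs_of_relComp_eq_relId (h₁s : relSurj r₁) (h₃t : relTotal r₃)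
    (h : relComp r₃ (relComp r₂ r₁) = relId X) :
    relLe (relComp (relComp (relConv r₂) r₂) r₁) r₁ := by
  rintro x m ⟨a, hxa, k, hak, hmk⟩
  obtain ⟨x₀, hkx₀⟩ := h₃t k
  obtain ⟨x₁, hx₁m⟩ := h₁s m
  have hx : x = x₀ := eq_of_relComp_eq_relId h hxa hak hkx₀
  have hx₁ : x₁ = x₀ := eq_of_relComp_eq_relId h hx₁m hmk hkx₀
  rwa [hx, ← hx₁]

end CompEqId

theorem stmt18_general {X X₁ X₂ : Type u} (r₁ : Rel' X X₁) (r₂ : Rel' X₁ X₂) (r₃ : Rel' X₂ X)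
    (h₁s : relSurj r₁)
    (h₃t : relTotal r₃)
    (h : relComp r₃ (relComp r₂ r₁) = relId X) :
    relComp r₃ (relComp (difunClosure r₂) r₁) = relId X := by
  rw [relComp_difunClosure_of_absorbs (absorbs_of_relComp_eq_relId h₁s h₃t h)]
  exact h

/-- For total and surjective relations `r₁, r₂, r₃` composing to the identity, replacing
`r₂` by its difunctional closure still yields the identity. -/
theorem stmt18 {X X₁ X₂ : Type u} (r₁ : Rel' X X₁) (r₂ : Rel' X₁ X₂) (r₃ : Rel' X₂ X)
    (h₁t : relTotal r₁) (h₁s : relSurj r₁)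
    (h₂t : relTotal r₂) (h₂s : relSurj r₂)
    (h₃t : relTotal r₃) (h₃s : relSurj r₃)
    (h : relComp r₃ (relComp r₂ r₁) = relId X) :
    relComp r₃ (relComp (difunClosure r₂) r₁) = relId X :=
  stmt18_general r₁ r₂ r₃ h₁s h₃t h
end

section
/- Let F be a Set-functor that preserves 1/4-iso pullbacks, and let r₁, …, rₙ be a composable sequence of total and surjective relations. If rₙ ⋅ … ⋅ r₁ = 1_X for some set X, then F̄rₙ ⋅ … ⋅ F̄r₁ ≤ 1_{F X}, where F̄ denotes the Barr lifting of F. -/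
open CategoryTheory

universe u

/-!
If `r` equalizes `f` and `g`, so does its Barr lifting with `F f` and `F g`: apply `F` to
`f ∘ π₁ = g ∘ π₂`. If `s ⋅ r` equalizes `h` and `g` with `r` surjective and `s` total, then `s` is
single-valued up to `g`, which yields an `h'` splitting the equalization at the middle object.
Inducting along the chain, `rₙ ⋅ … ⋅ r₁ = 1_X` equalizes `id` and `id`, hence so does
`F̄rₙ ⋅ … ⋅ F̄r₁`, i.e. it is contained in `1_{F X}`.
-/

def RelEqualizes {X Y Z : Type u} (r : Rel' X Y) (f : X → Z) (g : Y → Z) : Prop :=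
  ∀ x y, r x y → f x = g y

theorem RelEqualizes.barrLift (F : Type u ⥤ Type u) {X Y Z : Type u} {r : Rel' X Y}
    {f : X → Z} {g : Y → Z} (hfg : RelEqualizes r f g) :
    RelEqualizes (BarrLift F r) (F.map (TypeCat.ofHom f)) (F.map (TypeCat.ofHom g)) := by
  rintro _ _ ⟨t, rfl, rfl⟩
  have hsquare : (fun p : {p : X × Y // r p.1 p.2} => f p.1.1) = fun p => g p.1.2 :=
    funext fun p => hfg _ _ p.2
  calc F.map (TypeCat.ofHom f) (F.map (TypeCat.ofHom fun p => p.1.1) t)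
      = F.map (TypeCat.ofHom fun p : {p : X × Y // r p.1 p.2} => f p.1.1) t :=
        (F.map_comp_apply (TypeCat.ofHom _) (TypeCat.ofHom f) t).symm
    _ = F.map (TypeCat.ofHom fun p : {p : X × Y // r p.1 p.2} => g p.1.2) t := by rw [hsquare]
    _ = F.map (TypeCat.ofHom g) (F.map (TypeCat.ofHom fun p => p.1.2) t) :=
        F.map_comp_apply (TypeCat.ofHom _) (TypeCat.ofHom g) t

theorem RelEqualizes.exists_of_relComp {X Y Y' Z : Type u} {r : Rel' Y Y'} {s : Rel' Y' X}
    {h : Y → Z} {g : X → Z} (hr : relSurj r) (hs : relTotal s)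
    (hsr : RelEqualizes (relComp s r) h g) :
    ∃ h' : Y' → Z, RelEqualizes r h h' ∧ RelEqualizes s h' g := by
  choose pre hpre using hr
  refine ⟨fun y' => h (pre y'), fun y y' hyy' => ?_, fun y' x hx => hsr _ _ ⟨y', hpre y', hx⟩⟩
  obtain ⟨x, hx⟩ := hs y'
  exact (hsr y x ⟨y', hyy', hx⟩).trans (hsr _ _ ⟨y', hpre y', hx⟩).symm

theorem RelChain.comp_total : ∀ {X Z : Type u} (c : RelChain X Z),
    c.allTS → relTotal c.comp
  | _, _, .single _, hc => hc.1
  | _, _, .cons _ c, hc => fun x => by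
    obtain ⟨y, hy⟩ := hc.1.1 x
    obtain ⟨z, hz⟩ := c.comp_total hc.2 y
    exact ⟨z, y, hy, hz⟩

theorem RelChain.relEqualizes_barr (F : Type u ⥤ Type u) : ∀ {X Y Z : Type u} (c : RelChain X Y),
    c.allTS → ∀ {h : X → Z} {g : Y → Z}, RelEqualizes c.comp h g →
      RelEqualizes (c.barr F) (F.map (TypeCat.ofHom h)) (F.map (TypeCat.ofHom g))
  | _, _, _, .single _, _, _, _, hhg => hhg.barrLift F
  | _, _, _, .cons _ c, hc, _, _, hhg => by
    rintro a b ⟨m, ham, hmb⟩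
    obtain ⟨h', hr, hc'⟩ := hhg.exists_of_relComp hc.1.2 (c.comp_total hc.2)
    exact (hr.barrLift F a m ham).trans (c.relEqualizes_barr F hc.2 hc' m b hmb)

theorem stmt19_general (F : Type u ⥤ Type u)
    (X : Type u) (c : RelChain X X) (hTS : RelChain.allTS c)
    (hc : RelChain.comp c = relId X) :
    relLe (RelChain.barr F c) (relId (F.obj X)) := by
  have hid : RelEqualizes c.comp (id : X → X) id := by
    rw [hc]
    exact fun _ _ hxy => hxy
  have hmap := c.relEqualizes_barr F hTS hid
  rwa [show TypeCat.ofHom (id : X → X) = 𝟙 X from rfl, F.map_id] at hmap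

/-- For a functor preserving 1/4-iso pullbacks, every composable sequence of total and
surjective relations composing to an identity has a subidentity Barr-lifting composite. -/
theorem stmt19 (F : Type u ⥤ Type u) (h : Preserves14IsoPullbacks F)
    (X : Type u) (c : RelChain X X) (hTS : RelChain.allTS c)
    (hc : RelChain.comp c = relId X) :
    relLe (RelChain.barr F c) (relId (F.obj X)) :=
  stmt19_general F X c hTS hc
end
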